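/- arXiv:2201.12175 — 4 statements merged into one kernel-verified Lean document; each statement's English description precedes it below -/
import Mathlib

section
/- For every real γ with 0 < γ < 1, there exists a natural number n such that √n > 1/γ; in particular, for any such n and any positive reals N_1, ..., N_n summing to N, it holds that (1/n) * Σ_{i=1}^n 1/√(N_i) > (1/γ) * (1/√N). -/
theorem stmt_3 (γ : ℝ) (hγ0 : 0 < γ) (hγ1 : γ < 1) :
    ∃ n : ℕ, Real.sqrt (n : ℝ) > 1 / γ ∧
      ∀ N : Fin n → ℝ, (∀ i, 0 < N i) →
        (1 / (n : ℝ)) * ∑ i, 1 / Real.sqrt (N i) >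
          (1 / γ) * (1 / Real.sqrt (∑ i, N i)) := by
  have hγinv : 0 < 1 / γ := by positivity
  obtain ⟨n, hn⟩ := exists_nat_gt ((1 / γ) ^ 2)
  have hn0 : 0 < (n : ℝ) := lt_trans (by positivity) hn
  have hsn : Real.sqrt (n : ℝ) > 1 / γ := by
    have := Real.sqrt_lt_sqrt (by positivity) hn
    rwa [Real.sqrt_sq hγinv.le] at this
  refine ⟨n, hsn, fun N hN => ?_⟩
  set S := ∑ i, N i with hSdef
  have hnpos : 0 < n := by exact_mod_cast hn0
  have hS : 0 < S := Finset.sum_pos (fun i _ => hN i)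
    (Finset.univ_nonempty_iff.2 ⟨⟨0, hnpos⟩⟩)
  set A := ∑ i, 1 / Real.sqrt (N i) with hAdef
  set B := ∑ i, Real.sqrt (N i) with hBdef
  have hsNpos : ∀ i, 0 < Real.sqrt (N i) := fun i => Real.sqrt_pos.2 (hN i)
  -- Cauchy–Schwarz 1 : n² ≤ B * A
  have cs1 : ((n : ℝ)) ^ 2 ≤ B * A := by
    have := Finset.sum_sq_le_sum_mul_sum_of_sq_eq_mul (Finset.univ : Finset (Fin n))
      (r := fun _ => (1 : ℝ)) (f := fun i => Real.sqrt (N i))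
      (g := fun i => 1 / Real.sqrt (N i))
      (fun i _ => (hsNpos i).le) (fun i _ => by positivity)
      (fun i _ => by rw [one_pow, mul_one_div, div_self (hsNpos i).ne'])
    simpa [hAdef, hBdef, one_div] using this
  -- Cauchy–Schwarz 2 : B² ≤ n * S
  have cs2 : B ^ 2 ≤ (n : ℝ) * S := by
    have := Finset.sum_sq_le_sum_mul_sum_of_sq_eq_mul (Finset.univ : Finset (Fin n))
      (r := fun i => Real.sqrt (N i)) (f := fun _ => (1 : ℝ))
      (g := fun i => N i)
      (fun _ _ => zero_le_one) (fun i _ => (hN i).le)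
      (fun i _ => by rw [Real.sq_sqrt (hN i).le, one_mul])
    simpa using this
  have hBpos : 0 < B := Finset.sum_pos (fun i _ => hsNpos i)
    (Finset.univ_nonempty_iff.2 ⟨⟨0, hnpos⟩⟩)
  have hApos : 0 < A := Finset.sum_pos (fun i _ => one_div_pos.2 (hsNpos i))
    (Finset.univ_nonempty_iff.2 ⟨⟨0, hnpos⟩⟩)
  have hsS : 0 < Real.sqrt S := Real.sqrt_pos.2 hS
  have hsn' : 0 < Real.sqrt (n : ℝ) := Real.sqrt_pos.2 hn0
  -- B ≤ √n * √S
  have hB : B ≤ Real.sqrt (n : ℝ) * Real.sqrt S := by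
    rw [← Real.sqrt_mul hn0.le]
    calc B = Real.sqrt (B ^ 2) := (Real.sqrt_sq hBpos.le).symm
    _ ≤ Real.sqrt ((n : ℝ) * S) := Real.sqrt_le_sqrt cs2
  -- A * √S ≥ n * √n
  have key : (n : ℝ) * Real.sqrt (n : ℝ) ≤ A * Real.sqrt S := by
    have h1 : ((n : ℝ)) ^ 2 ≤ (Real.sqrt (n : ℝ) * Real.sqrt S) * A :=
      le_trans cs1 (mul_le_mul_of_nonneg_right hB hApos.le)
    have h2 : (n : ℝ) ^ 2 = ((n : ℝ) * Real.sqrt (n : ℝ)) * Real.sqrt (n : ℝ) := by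
      rw [mul_assoc, Real.mul_self_sqrt hn0.le, sq]
    nlinarith [hsn'.le, hsS.le, hApos.le]
  -- conclude
  have step1 : (1 / γ) * (1 / Real.sqrt S) < Real.sqrt (n : ℝ) * (1 / Real.sqrt S) :=
    mul_lt_mul_of_pos_right hsn (by positivity)
  have step2 : Real.sqrt (n : ℝ) * (1 / Real.sqrt S) ≤ (1 / (n : ℝ)) * A := by
    rw [mul_one_div, one_div_mul_eq_div, div_le_div_iff₀ hsS hn0]
    nlinarith [key]
  exact lt_of_lt_of_le step1 step2
end

section
/- Consider the MDP with states {0, 1, ..., n}, a single action, where state 0 transitions to each state i ∈ {1,...,n} with probability 1/n and states 1,...,n are terminal. Define e(s) = c/√(N(s)) for a constant c > 0, where N : {0,...,n} → ℕ satisfies N(i) ≥ 1 for all i and N(0) = Σ_{i=1}^n N(i). If √n > 1/γ for 0 < γ < 1, then Σ_{i=1}^n (1/n) * e(i) > (1/γ) * e(0). -/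
theorem stmt_4 (n : ℕ) (hn : 0 < n) (γ : ℝ) (hγ0 : 0 < γ) (hγ1 : γ < 1)
    (c : ℝ) (hc : 0 < c) (N : Fin (n + 1) → ℕ)
    (hN1 : ∀ i, 1 ≤ N i)
    (hN0 : (N 0 : ℝ) = ∑ i : Fin n, (N i.succ : ℝ))
    (hγn : Real.sqrt (n : ℝ) > 1 / γ)
    (e : Fin (n + 1) → ℝ) (he : ∀ s, e s = c / Real.sqrt (N s : ℝ)) :
    ∑ i : Fin n, (1 / (n : ℝ)) * e i.succ > (1 / γ) * e 0 := by
  set S : ℝ := ∑ i : Fin n, (N i.succ : ℝ) with hS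
  have hnR : (0 : ℝ) < n := Nat.cast_pos.mpr hn
  have hNpos : ∀ i : Fin n, (0 : ℝ) < (N i.succ : ℝ) := fun i =>
    Nat.cast_pos.mpr (hN1 i.succ)
  have hSpos : 0 < S := Finset.sum_pos (fun i _ => hNpos i) ⟨⟨0, hn⟩, Finset.mem_univ _⟩
  have hsqrtN : ∀ i : Fin n, 0 < Real.sqrt (N i.succ : ℝ) := fun i =>
    Real.sqrt_pos.mpr (hNpos i)
  set A : ℝ := ∑ i : Fin n, Real.sqrt (N i.succ : ℝ) with hA
  set B : ℝ := ∑ i : Fin n, 1 / Real.sqrt (N i.succ : ℝ) with hB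
  have hApos : 0 < A := Finset.sum_pos (fun i _ => hsqrtN i) ⟨⟨0, hn⟩, Finset.mem_univ _⟩
  have hBpos : 0 < B := Finset.sum_pos (fun i _ => one_div_pos.mpr (hsqrtN i))
    ⟨⟨0, hn⟩, Finset.mem_univ _⟩
  -- Cauchy 1 : n^2 ≤ A * B
  have hC1 : (n : ℝ) ^ 2 ≤ A * B := by
    have := Finset.sum_mul_sq_le_sq_mul_sq Finset.univ
      (fun i : Fin n => Real.sqrt (Real.sqrt (N i.succ : ℝ)))
      (fun i : Fin n => 1 / Real.sqrt (Real.sqrt (N i.succ : ℝ)))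
    have h1 : ∀ i : Fin n,
        Real.sqrt (Real.sqrt (N i.succ : ℝ)) * (1 / Real.sqrt (Real.sqrt (N i.succ : ℝ))) = 1 := by
      intro i
      have : 0 < Real.sqrt (Real.sqrt (N i.succ : ℝ)) := Real.sqrt_pos.mpr (hsqrtN i)
      field_simp
    have h2 : ∀ i : Fin n,
        Real.sqrt (Real.sqrt (N i.succ : ℝ)) ^ 2 = Real.sqrt (N i.succ : ℝ) := fun i =>
      Real.sq_sqrt (hsqrtN i).le
    have h3 : ∀ i : Fin n,
        (1 / Real.sqrt (Real.sqrt (N i.succ : ℝ))) ^ 2 = 1 / Real.sqrt (N i.succ : ℝ) := by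
      intro i
      rw [div_pow, one_pow, h2 i]
    simp only [h1, h2, h3, Finset.sum_const, Finset.card_univ, Fintype.card_fin,
      nsmul_eq_mul, mul_one] at this
    exact this
  -- Cauchy 2 : A^2 ≤ n * S
  have hC2 : A ^ 2 ≤ n * S := by
    have := sq_sum_le_card_mul_sum_sq (s := Finset.univ)
      (f := fun i : Fin n => Real.sqrt (N i.succ : ℝ))
    simpa [Real.sq_sqrt (hNpos _).le, hS] using this
  have hAle : A ≤ Real.sqrt n * Real.sqrt S := by
    have : A ≤ Real.sqrt (n * S) := by
      rw [← Real.sqrt_sq hApos.le]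
      exact Real.sqrt_le_sqrt hC2
    rwa [Real.sqrt_mul hnR.le] at this
  -- B ≥ n * √n / √S
  have hsqS : 0 < Real.sqrt S := Real.sqrt_pos.mpr hSpos
  have hsqn : 0 < Real.sqrt n := Real.sqrt_pos.mpr hnR
  have hBge : (n : ℝ) * Real.sqrt n / Real.sqrt S ≤ B := by
    rw [div_le_iff₀ hsqS]
    have h1 : (n : ℝ) ^ 2 ≤ Real.sqrt n * Real.sqrt S * B :=
      hC1.trans (mul_le_mul_of_nonneg_right hAle hBpos.le)
    have h2 : (n : ℝ) * Real.sqrt n * (Real.sqrt n * Real.sqrt S) = Real.sqrt n * Real.sqrt n * ((n:ℝ) * Real.sqrt S) := by ring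
    have hnn : Real.sqrt n * Real.sqrt n = (n : ℝ) := Real.mul_self_sqrt hnR.le
    -- want : n * √n ≤ B * √S
    nlinarith [hsqn, hsqS, hBpos, hnR]
  -- rewrite the sums
  have hN0' : Real.sqrt (N 0 : ℝ) = Real.sqrt S := by rw [hN0]
  have hLHS : ∑ i : Fin n, (1 / (n : ℝ)) * e i.succ = c / n * B := by
    simp only [he, hB, Finset.mul_sum]
    apply Finset.sum_congr rfl
    intro i _
    rw [div_mul_eq_mul_div, mul_one_div]
    field_simp
  have hRHS : (1 / γ) * e 0 = c / γ / Real.sqrt S := by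
    rw [he 0, hN0']; field_simp
  rw [hLHS, hRHS]
  have step1 : c * Real.sqrt n / Real.sqrt S ≤ c / n * B := by
    have h := mul_le_mul_of_nonneg_left hBge (le_of_lt (div_pos hc hnR))
    calc c * Real.sqrt n / Real.sqrt S
        = c / n * ((n : ℝ) * Real.sqrt n / Real.sqrt S) := by field_simp
      _ ≤ c / n * B := h
  have step2 : c / γ / Real.sqrt S < c * Real.sqrt n / Real.sqrt S := by
    have hnum : c / γ < c * Real.sqrt n := by
      rw [div_eq_mul_one_div]
      exact mul_lt_mul_of_pos_left hγn hc
    exact (div_lt_div_iff_of_pos_right hsqS).mpr hnum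
  exact lt_of_lt_of_le step2 step1
end

section
/- Let S, A be finite, Q : S × A → ℝ, and let π be π_b-advantageous with respect to Q, i.e., Σ_a Q(s,a) π(a|s) ≥ Σ_a Q(s,a) π_b(a|s) for all s. Let Q' : S × A → ℝ satisfy |Q(s,a) - Q'(s,a)| ≤ e(s,a) * G_max for all (s,a), and let π be (π_b, ε, e)-constrained. Then for every state s, Σ_a Q'(s,a) π(a|s) - Σ_a Q'(s,a) π_b(a|s) ≥ -ε * G_max. -/
theorem stmt_9 (S A : Type*) [Fintype S] [Fintype A]
    (Q Q' : S → A → ℝ) (e : S → A → ℝ) (ε Gmax : ℝ) (hε : 0 < ε) (hG : 0 < Gmax)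
    (π πb : S → A → ℝ)
    (hπ : ∀ s, (∀ a, 0 ≤ π s a) ∧ ∑ a, π s a = 1)
    (hπb : ∀ s, (∀ a, 0 ≤ πb s a) ∧ ∑ a, πb s a = 1)
    (he : ∀ s a, 0 ≤ e s a)
    (hadv : ∀ s, ∑ a, Q s a * π s a ≥ ∑ a, Q s a * πb s a)
    (herr : ∀ s a, |Q s a - Q' s a| ≤ e s a * Gmax)
    (hconstr : ∀ s, ∑ a, e s a * |π s a - πb s a| ≤ ε) :
    ∀ s, ∑ a, Q' s a * π s a - ∑ a, Q' s a * πb s a ≥ -ε * Gmax := by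
  intro s
  have key : ∑ a, Q' s a * π s a - ∑ a, Q' s a * πb s a
      = (∑ a, Q s a * π s a - ∑ a, Q s a * πb s a)
        + ∑ a, (Q' s a - Q s a) * (π s a - πb s a) := by
    rw [← Finset.sum_sub_distrib, ← Finset.sum_sub_distrib, ← Finset.sum_add_distrib]
    exact Finset.sum_congr rfl fun a _ => by ring
  have h1 : (0:ℝ) ≤ ∑ a, Q s a * π s a - ∑ a, Q s a * πb s a :=
    sub_nonneg.mpr (hadv s)
  have h2 : ∑ a, (Q' s a - Q s a) * (π s a - πb s a)
      ≥ -∑ a, (e s a * |π s a - πb s a|) * Gmax := by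
    rw [← Finset.sum_neg_distrib]
    apply Finset.sum_le_sum
    intro a _
    have h3 : |(Q' s a - Q s a) * (π s a - πb s a)| ≤ (e s a * Gmax) * |π s a - πb s a| := by
      rw [abs_mul]
      exact mul_le_mul_of_nonneg_right (abs_sub_comm (Q s a) (Q' s a) ▸ herr s a) (abs_nonneg _)
    have := neg_abs_le ((Q' s a - Q s a) * (π s a - πb s a))
    nlinarith [abs_nonneg (π s a - πb s a)]
  have h4 : ∑ a, (e s a * |π s a - πb s a|) * Gmax ≤ ε * Gmax := by
    rw [← Finset.sum_mul]
    exact mul_le_mul_of_nonneg_right (hconstr s) hG.le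
  rw [key]
  linarith
end

section
/- Let n ≥ 2 be a natural number and γ ∈ (1/√n, 1). For the uniform distribution p(i) = 1/n over i ∈ {1,...,n} and any function N : {0,1,...,n} → ℕ with N(i) ≥ 1 for i ≥ 1 and N(0) = Σ_{i=1}^n N(i), there is no constant κ < 1/γ such that Σ_{i=1}^n p(i) / √(N(i)) ≤ κ / √(N(0)). -/
theorem stmt_11 (n : ℕ) (hn : 2 ≤ n) (γ : ℝ)
    (hγlb : 1 / Real.sqrt (n : ℝ) < γ) (hγ1 : γ < 1)
    (N : Fin (n + 1) → ℕ) (hN1 : ∀ i, i ≠ 0 → 1 ≤ N i)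
    (hN0 : (N 0 : ℝ) = ∑ i : Fin n, (N i.succ : ℝ)) :
    ¬ ∃ κ : ℝ, κ < 1 / γ ∧
      ∑ i : Fin n, (1 / (n : ℝ)) / Real.sqrt (N i.succ : ℝ) ≤
        κ / Real.sqrt (N 0 : ℝ) := by
  rintro ⟨κ, hκ, hsum⟩
  set a : Fin n → ℝ := fun i => (N i.succ : ℝ) with ha
  have hnpos : (0:ℝ) < n := by
    have : 0 < n := by omega
    exact_mod_cast this
  have ha1 : ∀ i, 1 ≤ a i := fun i => by
    have h := hN1 i.succ (Fin.succ_ne_zero i)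
    show (1:ℝ) ≤ (N i.succ : ℝ)
    exact_mod_cast h
  have ha0 : ∀ i, 0 < a i := fun i => lt_of_lt_of_le one_pos (ha1 i)
  set S : ℝ := (N 0 : ℝ) with hSdef
  have hS : S = ∑ i, a i := hN0
  have hSpos : 0 < S := by
    rw [hS]
    apply Finset.sum_pos (fun i _ => ha0 i)
    haveI : Nonempty (Fin n) := Fin.pos_iff_nonempty.mp (by omega)
    exact Finset.univ_nonempty
  set T : ℝ := ∑ i, 1 / Real.sqrt (a i) with hT
  set U : ℝ := ∑ i, Real.sqrt (a i) with hU
  have hγpos : 0 < γ := lt_trans (by positivity) hγlb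
  have hsqrtn : (0:ℝ) < Real.sqrt n := Real.sqrt_pos.mpr hnpos
  have hsqrtS : (0:ℝ) < Real.sqrt S := Real.sqrt_pos.mpr hSpos
  -- κ < √n
  have hκn : κ < Real.sqrt n := by
    have h1 : 1 / γ < Real.sqrt n := by
      rw [div_lt_iff₀ hγpos]
      have := (div_lt_iff₀ hsqrtn).mp hγlb
      linarith [mul_comm γ (Real.sqrt n)]
    linarith
  -- Cauchy-Schwarz: n^2 ≤ U * T
  have hCS1 : (n:ℝ)^2 ≤ U * T := by
    have h := Finset.sum_mul_sq_le_sq_mul_sq Finset.univ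
      (fun i => Real.sqrt (Real.sqrt (a i)))
      (fun i => 1 / Real.sqrt (Real.sqrt (a i)))
    have heq1 : ∀ i : Fin n,
        Real.sqrt (Real.sqrt (a i)) * (1 / Real.sqrt (Real.sqrt (a i))) = 1 := by
      intro i
      have : Real.sqrt (Real.sqrt (a i)) ≠ 0 :=
        ne_of_gt (Real.sqrt_pos.mpr (Real.sqrt_pos.mpr (ha0 i)))
      field_simp
    have heq2 : ∀ i : Fin n, Real.sqrt (Real.sqrt (a i)) ^ 2 = Real.sqrt (a i) := by
      intro i; exact Real.sq_sqrt (Real.sqrt_nonneg _)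
    have heq3 : ∀ i : Fin n,
        (1 / Real.sqrt (Real.sqrt (a i))) ^ 2 = 1 / Real.sqrt (a i) := by
      intro i
      rw [div_pow, one_pow, heq2 i]
    simp only [heq1, heq2, heq3] at h
    simpa [hT, hU, Finset.card_univ] using h
  -- Cauchy-Schwarz: U^2 ≤ n * S
  have hCS2 : U^2 ≤ n * S := by
    have h := Finset.sum_mul_sq_le_sq_mul_sq Finset.univ
      (fun _ : Fin n => (1:ℝ)) (fun i => Real.sqrt (a i))
    have heq2 : ∀ i : Fin n, Real.sqrt (a i) ^ 2 = a i := by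
      intro i; exact Real.sq_sqrt (ha0 i).le
    simp only [one_mul, one_pow, heq2, Finset.sum_const, Finset.card_univ,
      Fintype.card_fin, nsmul_eq_mul, mul_one] at h
    rw [hS]
    simpa [hU] using h
  have hUnn : 0 ≤ U := Finset.sum_nonneg fun i _ => Real.sqrt_nonneg _
  have hTnn : 0 ≤ T := Finset.sum_nonneg fun i _ => by positivity
  have hUle : U ≤ Real.sqrt n * Real.sqrt S := by
    nlinarith [Real.sq_sqrt hnpos.le, Real.sq_sqrt hSpos.le,
      mul_pos hsqrtn hsqrtS]
  -- from hsum : (1/n) * T ≤ κ / √S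
  have hsum' : (1/(n:ℝ)) * T ≤ κ / Real.sqrt S := by
    rw [hT, Finset.mul_sum]
    convert hsum using 2 with i
    ring
  have h3 : T * Real.sqrt S ≤ κ * n := by
    have := (div_le_div_iff₀ hnpos hsqrtS).mp (by
      simpa [div_eq_mul_inv, mul_comm, one_div] using hsum' : T / n ≤ κ / Real.sqrt S)
    linarith
  have h4 : U * T ≤ (Real.sqrt n * Real.sqrt S) * T :=
    mul_le_mul_of_nonneg_right hUle hTnn
  have h5 : Real.sqrt n * (T * Real.sqrt S) ≤ Real.sqrt n * (κ * n) :=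
    mul_le_mul_of_nonneg_left h3 hsqrtn.le
  have hfinal : (n:ℝ)^2 < (n:ℝ)^2 := by
    nlinarith [hCS1, h4, h5, hκn, Real.sq_sqrt hnpos.le, mul_pos hnpos hsqrtn]
  exact lt_irrefl _ hfinal
end
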